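/- Let κ be a finite kernel from [0,1] to [0,1] (a measurable family t ↦ κ_t of finite Borel measures on [0,1] with uniformly bounded total mass). Suppose that for λ-almost every t ∈ [0,1] there is a constant C_t such that ∑_k |∫₀¹ f_k dκ_t|² ≤ C_t for every sequence (f_k) of continuous complex-valued functions on [0,1] orthonormal in L²([0,1],λ). Then the measure λ ⊗ κ on [0,1]×[0,1], defined by (λ ⊗ κ)(E) = ∫₀¹ κ_t({s : (t,s) ∈ E}) dλ(t), is absolutely continuous with respect to the product measure λ ⊗ λ. -/

import Mathlib

open MeasureTheory ProbabilityTheory unitInterval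
open scoped ProbabilityTheory

/-- A sequence of continuous complex functions on `[0,1]` is orthonormal in
`L²([0,1], λ)`. -/
def OrthonormalSeq (f : ℕ → C(I, ℂ)) : Prop :=
  ∀ j k : ℕ, (∫ t, f j t * (starRingEnd ℂ) (f k t)) = if j = k then (1 : ℂ) else 0

/-!
For a.e. `t` the fibre `κ t` is absolutely continuous with respect to `λ`, and fibrewise absolute
continuity gives `λ ⊗ κ ≪ λ ⊗ const λ = λ ⊗ λ`.

If a finite measure `μ` on `[0,1]` is not absolutely continuous, it charges a compact `λ`-null set
`K`. Urysohn functions equal to `1` on `K` and vanishing off small neighbourhoods of `K` show that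
`g ↦ ∫ g dμ` is unbounded for the `L²(λ)` norm on continuous functions. An unbounded linear
functional on an inner product space has modulus at least `1` along some orthonormal sequence:
given finitely many vectors, project a vector with a large value onto the orthogonal complement of
their span, on which the functional is bounded, and normalize. Along such a sequence
`∑ₖ |∫ f_k dμ|²` is unbounded.
-/

open scoped InnerProductSpace

section UnboundedFunctional

variable {𝕜 E : Type*} [RCLike 𝕜] [NormedAddCommGroup E] [InnerProductSpace 𝕜 E]

theorem LinearMap.exists_mem_orthogonal_norm_eq_one_one_le_norm_apply (L : E →ₗ[𝕜] 𝕜)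
    (hL : ∀ C : ℝ, ∃ x, C * ‖x‖ < ‖L x‖) (K : Submodule 𝕜 E) [FiniteDimensional 𝕜 K] :
    ∃ y ∈ Kᗮ, ‖y‖ = 1 ∧ 1 ≤ ‖L y‖ := by
  set B := ‖LinearMap.toContinuousLinearMap (L ∘ₗ K.subtype)‖
  obtain ⟨x, hx⟩ := hL (B + 1)
  set z := x - K.starProjection x
  have hLproj : ‖L (K.starProjection x)‖ ≤ B * ‖x‖ :=
    calc ‖L (K.starProjection x)‖ ≤ B * ‖K.starProjection x‖ :=
          (LinearMap.toContinuousLinearMap (L ∘ₗ K.subtype)).le_opNorm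
            (K.orthogonalProjectionOnto x)
      _ ≤ B * ‖x‖ := by gcongr; exact K.norm_starProjection_apply_le x
  have hz : ‖z‖ ≤ ‖x‖ := by
    simpa [z] using Kᗮ.norm_starProjection_apply_le x
  have hLz : ‖z‖ < ‖L z‖ := by
    have : ‖L x‖ ≤ ‖L z‖ + ‖L (K.starProjection x)‖ := by
      simpa [z, map_sub] using norm_le_norm_sub_add (L x) (L (K.starProjection x))
    nlinarith
  have hz0 : ‖z‖ ≠ 0 := fun h0 => by simp [norm_eq_zero.mp h0] at hLz
  refine ⟨(‖z‖⁻¹ : 𝕜) • z, K.orthogonal.smul_mem _ (K.sub_starProjection_mem_orthogonal x), ?_, ?_⟩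
  · rw [norm_smul, norm_inv, RCLike.norm_ofReal, abs_norm, inv_mul_cancel₀ hz0]
  · rw [map_smul, smul_eq_mul, norm_mul, norm_inv, RCLike.norm_ofReal, abs_norm,
      le_inv_mul_iff₀ (by positivity)]
    linarith

theorem LinearMap.exists_orthonormal_one_le_norm_apply (L : E →ₗ[𝕜] 𝕜)
    (hL : ∀ C : ℝ, ∃ x, C * ‖x‖ < ‖L x‖) :
    ∃ e : ℕ → E, Orthonormal 𝕜 e ∧ ∀ k, 1 ≤ ‖L (e k)‖ := by
  obtain ⟨e, he, horth⟩ := exists_seq_of_forall_finset_exists (fun y => ‖y‖ = 1 ∧ 1 ≤ ‖L y‖)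
    (fun x y => ⟪x, y⟫_𝕜 = 0) fun s _ => by
      obtain ⟨y, hy, hy1, hLy⟩ :=
        L.exists_mem_orthogonal_norm_eq_one_one_le_norm_apply hL (Submodule.span 𝕜 s)
      exact ⟨y, ⟨hy1, hLy⟩, fun x hx =>
        (Submodule.mem_orthogonal _ _).mp hy x (Submodule.subset_span hx)⟩
  refine ⟨e, ⟨fun k => (he k).1, fun m n hmn => ?_⟩, fun k => (he k).2⟩
  rcases hmn.lt_or_gt with h | h
  · exact horth m n h
  · exact inner_eq_zero_symm.mp (horth n m h)

end UnboundedFunctional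

theorem MeasureTheory.Measure.exists_isCompact_measure_eq_zero_of_not_absolutelyContinuous
    {X : Type*} [TopologicalSpace X] [MeasurableSpace X] {μ ν : Measure X} [μ.InnerRegular]
    (h : ¬ μ ≪ ν) : ∃ K, IsCompact K ∧ ν K = 0 ∧ 0 < μ K := by
  obtain ⟨s, hνs, hμs⟩ : ∃ s, ν s = 0 ∧ μ s ≠ 0 := by
    contrapose! h
    exact fun s => h s
  obtain ⟨t, hst, ht, hνt⟩ := exists_measurable_superset_of_null hνs
  obtain ⟨K, hKt, hK, hμK⟩ :=
    ht.exists_lt_isCompact ((pos_iff_ne_zero.mpr hμs).trans_le (measure_mono hst))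
  exact ⟨K, hK, measure_mono_null hKt hνt, hμK⟩

section ContinuousFunctionsInL2

theorem ContinuousMap.integrable {X E : Type*} [TopologicalSpace X] [CompactSpace X]
    [MeasurableSpace X] [OpensMeasurableSpace X] [NormedAddCommGroup E] (g : C(X, E))
    (μ : Measure X) [IsFiniteMeasure μ] : Integrable g μ :=
  g.continuous.integrable_of_hasCompactSupport (HasCompactSupport.of_compactSpace _)

variable {X 𝕜 : Type*} [TopologicalSpace X] [CompactSpace X] [MeasurableSpace X] [BorelSpace X]
  [RCLike 𝕜]

variable (𝕜) in
noncomputable def ContinuousMap.integralLinearMap (μ : Measure X) [IsFiniteMeasure μ] :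
    C(X, 𝕜) →ₗ[𝕜] 𝕜 where
  toFun g := ∫ x, g x ∂μ
  map_add' f g := integral_add (f.integrable μ) (g.integrable μ)
  map_smul' c g := integral_smul c g

theorem ContinuousMap.norm_toLp_sq_le (ν : Measure X) [IsFiniteMeasure ν] {g : C(X, 𝕜)}
    {U : Set X} (hg : ∀ x, ‖g x‖ ≤ 1) (hgU : ∀ x ∉ U, g x = 0) :
    ‖ContinuousMap.toLp 2 ν 𝕜 g‖ ^ 2 ≤ ν.real U := by
  have hinner : ‖ContinuousMap.toLp 2 ν 𝕜 g‖ ^ 2 = ∫ x, ‖g x‖ ^ 2 ∂ν := by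
    rw [@norm_sq_eq_re_inner 𝕜, ContinuousMap.inner_toLp, ← integral_re]
    · simp [RCLike.mul_conj]
    · exact (g * star g).integrable ν
  calc ‖ContinuousMap.toLp 2 ν 𝕜 g‖ ^ 2 = ∫ x in U, ‖g x‖ ^ 2 ∂ν := by
        rw [hinner, setIntegral_eq_integral_of_forall_compl_eq_zero fun x hx => by simp [hgU x hx]]
    _ ≤ 1 * ν.real U := by
        refine (Real.le_norm_self _).trans
          (norm_setIntegral_le_of_norm_le_const (measure_lt_top _ _) fun x _ => ?_)
        simpa using hg x
    _ = ν.real U := one_mul _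

theorem exists_continuousMap_mul_norm_toLp_lt_norm_integral [T2Space X] {μ ν : Measure X}
    [IsFiniteMeasure μ] [μ.InnerRegular] [IsFiniteMeasure ν] [ν.OuterRegular] (h : ¬ μ ≪ ν)
    (C : ℝ) : ∃ g : C(X, 𝕜), C * ‖ContinuousMap.toLp 2 ν 𝕜 g‖ < ‖∫ x, g x ∂μ‖ := by
  obtain ⟨K, hK, hνK, hμK⟩ :=
    Measure.exists_isCompact_measure_eq_zero_of_not_absolutelyContinuous h
  set c := μ.real K
  have hc : 0 < c := ENNReal.toReal_pos hμK.ne' (measure_ne_top μ K)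
  have hδ : 0 < c / max C 1 := div_pos hc (lt_max_of_lt_right one_pos)
  obtain ⟨U, hKU, hU, hνU⟩ := K.exists_isOpen_lt_of_lt (ENNReal.ofReal ((c / max C 1) ^ 2))
    (hνK ▸ ENNReal.ofReal_pos.mpr (pow_pos hδ 2))
  obtain ⟨g, hg0, hg1, hg01⟩ := exists_continuous_zero_one_of_isClosed hU.isClosed_compl
    hK.isClosed (Set.disjoint_compl_left_iff_subset.mpr hKU)
  let G : C(X, 𝕜) := ⟨fun x => g x, RCLike.continuous_ofReal.comp g.continuous⟩
  have hGnorm : ‖ContinuousMap.toLp 2 ν 𝕜 G‖ < c / max C 1 := by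
    refine lt_of_pow_lt_pow_left₀ 2 hδ.le ?_
    calc ‖ContinuousMap.toLp 2 ν 𝕜 G‖ ^ 2 ≤ ν.real U :=
          G.norm_toLp_sq_le ν
            (fun x => by simpa [G, abs_le] using ⟨by linarith [(hg01 x).1], (hg01 x).2⟩)
            (fun x hx => by simp [G, hg0 hx])
      _ < (c / max C 1) ^ 2 := ENNReal.toReal_lt_of_lt_ofReal hνU
  have hGint : c ≤ ‖∫ x, G x ∂μ‖ := by
    have : c ≤ ∫ x, g x ∂μ :=
      calc c = ∫ x in K, g x ∂μ := by
            rw [setIntegral_congr_fun hK.measurableSet hg1]; simp [c]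
        _ ≤ ∫ x, g x ∂μ := setIntegral_le_integral (g.integrable μ)
            (Filter.Eventually.of_forall fun x => (hg01 x).1)
    simpa [G, integral_ofReal, abs_of_nonneg (hc.le.trans this)] using this
  refine ⟨G, ?_⟩
  calc C * ‖ContinuousMap.toLp 2 ν 𝕜 G‖ ≤ max C 1 * ‖ContinuousMap.toLp 2 ν 𝕜 G‖ := by
        gcongr; exact le_max_left C 1
    _ < c := (lt_div_iff₀' (lt_max_of_lt_right one_pos)).mp hGnorm
    _ ≤ ‖∫ x, G x ∂μ‖ := hGint

theorem exists_orthonormal_toLp_one_le_norm_integral [T2Space X] {μ ν : Measure X}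
    [IsFiniteMeasure μ] [μ.InnerRegular] [IsFiniteMeasure ν] [ν.OuterRegular] [ν.IsOpenPosMeasure]
    (h : ¬ μ ≪ ν) :
    ∃ f : ℕ → C(X, 𝕜), Orthonormal 𝕜 (fun k => ContinuousMap.toLp 2 ν 𝕜 (f k)) ∧
      ∀ k, 1 ≤ ‖∫ x, f k x ∂μ‖ := by
  let e := LinearEquiv.ofInjective (ContinuousMap.toLp 2 ν 𝕜 : C(X, 𝕜) →L[𝕜] Lp 𝕜 2 ν).toLinearMap
    (ContinuousMap.toLp_injective ν)
  let L := ContinuousMap.integralLinearMap 𝕜 μ ∘ₗ e.symm.toLinearMap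
  have hL : ∀ C : ℝ, ∃ x, C * ‖x‖ < ‖L x‖ := fun C => by
    obtain ⟨g, hg⟩ := exists_continuousMap_mul_norm_toLp_lt_norm_integral (𝕜 := 𝕜) h C
    refine ⟨e g, ?_⟩
    simp only [L, LinearMap.comp_apply, LinearEquiv.coe_coe, LinearEquiv.symm_apply_apply]
    exact hg
  obtain ⟨v, hv, hLv⟩ := L.exists_orthonormal_one_le_norm_apply hL
  refine ⟨fun k => e.symm (v k), ?_, hLv⟩
  convert hv.comp_linearIsometry (Submodule.subtypeₗᵢ _) with k
  exact congr_arg Subtype.val (e.apply_symm_apply (v k))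

end ContinuousFunctionsInL2

instance unitInterval.isOpenPosMeasure_volume : (volume : Measure I).IsOpenPosMeasure where
  open_pos U hU hne := by
    obtain ⟨a, b, hab, hsub⟩ := hU.exists_Ioo_subset hne
    refine (measure_mono hsub).trans_lt' ?_ |>.ne'
    simpa [unitInterval.volume_Ioo] using hab

theorem orthonormalSeq_iff_orthonormal_toLp (f : ℕ → C(I, ℂ)) :
    OrthonormalSeq f ↔
      Orthonormal ℂ (fun k => ContinuousMap.toLp 2 (volume : Measure I) ℂ (f k)) := by
  simp only [orthonormal_iff_ite, ContinuousMap.inner_toLp, OrthonormalSeq]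
  exact ⟨fun h j k => (h k j).trans (if_congr eq_comm rfl rfl),
    fun h j k => (h k j).trans (if_congr eq_comm rfl rfl)⟩

theorem absolutelyContinuous_volume_of_sum_norm_integral_sq_le (μ : Measure I) [IsFiniteMeasure μ]
    (hμ : ∃ C : ℝ, ∀ f : ℕ → C(I, ℂ), OrthonormalSeq f →
      ∀ n : ℕ, ∑ k ∈ Finset.range n, ‖∫ s, f k s ∂μ‖ ^ 2 ≤ C) :
    μ ≪ (volume : Measure I) := by
  by_contra h
  obtain ⟨C, hC⟩ := hμ
  obtain ⟨f, hf, hf1⟩ := exists_orthonormal_toLp_one_le_norm_integral (𝕜 := ℂ) h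
  obtain ⟨n, hn⟩ := exists_nat_gt C
  have hle := hC f ((orthonormalSeq_iff_orthonormal_toLp f).mpr hf) n
  have hge : (n : ℝ) ≤ ∑ k ∈ Finset.range n, ‖∫ s, f k s ∂μ‖ ^ 2 := by
    simpa using Finset.card_nsmul_le_sum (Finset.range n) _ 1 fun k _ => one_le_pow₀ (hf1 k)
  linarith

/-- Let `κ` be a finite kernel from `[0,1]` to `[0,1]`.  If for `λ`-a.e. `t` the sums
`∑ₖ |∫ f_k dκ_t|²` over orthonormal sequences of continuous functions are bounded by a
constant `C_t`, then the measure `λ ⊗ κ` on the square is absolutely continuous with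
respect to the product measure `λ ⊗ λ`. -/
theorem kernel_bounded_fourier_sums_implies_ac (κ : Kernel I I) [IsFiniteKernel κ]
    (hfib : ∀ᵐ t ∂(volume : Measure I), ∃ C : ℝ,
      ∀ f : ℕ → C(I, ℂ), OrthonormalSeq f →
        ∀ n : ℕ, ∑ k ∈ Finset.range n, ‖∫ s, f k s ∂(κ t)‖ ^ 2 ≤ C) :
    ((volume : Measure I) ⊗ₘ κ) ≪ (volume : Measure I).prod (volume : Measure I) := by
  have hκ : ∀ᵐ t ∂(volume : Measure I), κ t ≪ Kernel.const I volume t := by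
    filter_upwards [hfib] with t ht
    exact absolutelyContinuous_volume_of_sum_norm_integral_sq_le (κ t) ht
  simpa only [Measure.compProd_const] using Measure.AbsolutelyContinuous.compProd_right hκ
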